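/- arXiv:1303.0374 — 4 statements merged into one kernel-verified Lean document; each statement's English description precedes it below -/
import Mathlib

section
/- Let E and B be compact metric spaces, p : E → B a continuous surjection, f : B → B a continuous minimal map, and F : E → E a continuous map with p ∘ F = f ∘ p. Let M be a minimal set of F with p(M) = B, let H be the homeo-part of (B, f), and suppose that the fibre M ∩ p⁻¹(z) is finite for some z ∈ H. Then N := min{card(M ∩ p⁻¹(x)) : x ∈ H} is a positive integer and there is a residual set R ⊆ B such that card(M ∩ p⁻¹(b)) = N for every b ∈ R. -/
open Set Topology

/-- The homeo-part of a dynamical system `(X, f)`: the set of points `x₀` whose full orbit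
`{y | ∃ i j ≥ 0, f^[i] y = f^[j] x₀}` has the form `{…, x₋₁, x₀, x₁, …}` for a two-sided
sequence with `f(xₙ) = xₙ₊₁`. -/
def homeoPart {X : Type*} (f : X → X) : Set X :=
  {x₀ | ∃ u : ℤ → X, u 0 = x₀ ∧ (∀ n : ℤ, f (u n) = u (n + 1)) ∧
    {y | ∃ i j : ℕ, f^[i] y = f^[j] x₀} = Set.range u}

/-!
Over a point `x` of the homeo-part `H`, `f⁻¹(f x) = {x}`, so the fibre of `M` over `f x` is the
`F`-image of the fibre over `x`: fibre cardinalities can only drop along forward orbits in `H`.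
Hence a point `x₀ ∈ H` of minimal fibre cardinality `N` keeps fibres of cardinality `N` along its
whole (dense) forward orbit. Since `M` is compact, covers of a fibre by `N` small balls persist to
nearby fibres, so `{b | #(M ∩ p⁻¹ b) ≤ N}` is a dense `G_δ`. Finally `H` is residual: minimality
makes `f` semi-open, so the `f`-images of the closed nowhere dense sets carrying the points with
several preimages stay nowhere dense, and a point whose full orbit avoids them lies in `H`.
-/

open Function

section FullOrbit

variable {X : Type*} {f : X → X} {x y : X} {u : ℤ → X}

def fullOrbit (f : X → X) (x : X) : Set X := {y | ∃ i j : ℕ, f^[i] y = f^[j] x}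

lemma mem_homeoPart_iff : x ∈ homeoPart f ↔
    ∃ u : ℤ → X, u 0 = x ∧ (∀ n, f (u n) = u (n + 1)) ∧ fullOrbit f x = range u :=
  Iff.rfl

lemma iterate_mem_fullOrbit (n : ℕ) : f^[n] x ∈ fullOrbit f x := ⟨0, n, rfl⟩

lemma mem_fullOrbit_of_apply_mem (h : f y ∈ fullOrbit f x) : y ∈ fullOrbit f x := by
  obtain ⟨i, j, hij⟩ := h
  exact ⟨i + 1, j, by rwa [iterate_succ_apply]⟩

lemma fullOrbit_apply : fullOrbit f (f x) = fullOrbit f x := by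
  ext y
  constructor
  · rintro ⟨i, j, h⟩
    exact ⟨i, j + 1, by rw [h, iterate_succ_apply]⟩
  · rintro ⟨i, j, h⟩
    refine ⟨i + 1, j, ?_⟩
    rw [iterate_succ_apply', h, ← iterate_succ_apply' f j x, iterate_succ_apply]

lemma iterate_apply_eq_of_apply_eq (hu : ∀ n, f (u n) = u (n + 1)) (n : ℤ) (k : ℕ) :
    f^[k] (u n) = u (n + k) := by
  induction k with
  | zero => simp
  | succ k ih => rw [iterate_succ_apply', ih, hu, Nat.cast_succ, add_assoc]

lemma range_subset_fullOrbit (hu : ∀ n, f (u n) = u (n + 1)) : range u ⊆ fullOrbit f (u 0) := by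
  rintro _ ⟨n, rfl⟩
  refine ⟨(-n).toNat, n.toNat, ?_⟩
  rw [iterate_apply_eq_of_apply_eq hu, iterate_apply_eq_of_apply_eq hu]
  congr 1
  omega

lemma fullOrbit_subset_range (hu : ∀ n, f (u n) = u (n + 1))
    (h : ∀ y ∈ fullOrbit f (u 0), (f ⁻¹' {y}).Subsingleton) : fullOrbit f (u 0) ⊆ range u := by
  rintro y ⟨i, j, hij⟩
  induction i generalizing y with
  | zero => exact ⟨j, by simpa [iterate_apply_eq_of_apply_eq hu] using hij.symm⟩
  | succ i ih =>
    rw [iterate_succ_apply] at hij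
    obtain ⟨n, hn⟩ := ih hij
    have hprev : f (u (n - 1)) = f y := by rw [hu, sub_add_cancel, hn]
    exact ⟨n - 1, h (f y) ⟨i, j, hij⟩ hprev rfl⟩

lemma injective_of_periodicPts_eq_empty (hu : ∀ n, f (u n) = u (n + 1))
    (hf : periodicPts f = ∅) : Injective u := by
  have key : ∀ a b, a ≤ b → u a = u b → a = b := by
    intro a b hab heq
    by_contra hne
    have hper : IsPeriodicPt f (b - a).toNat (u a) := by
      rw [IsPeriodicPt, IsFixedPt, iterate_apply_eq_of_apply_eq hu, heq]
      congr 1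
      omega
    exact (eq_empty_iff_forall_notMem.1 hf) _ (mk_mem_periodicPts (by omega) hper)
  intro a b h
  rcases le_total a b with hab | hab
  exacts [key a b hab h, (key b a hab h.symm).symm]

lemma apply_mem_homeoPart (hx : x ∈ homeoPart f) : f x ∈ homeoPart f := by
  obtain ⟨u, rfl, hu, horb⟩ := mem_homeoPart_iff.1 hx
  refine mem_homeoPart_iff.2 ⟨fun n => u (n + 1), by simp [hu 0], fun n => hu (n + 1), ?_⟩
  rw [fullOrbit_apply, horb]
  exact ((Equiv.addRight (1 : ℤ)).surjective.range_comp u).symm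

lemma subsingleton_preimage_of_mem_homeoPart (hf : Injective f ∨ periodicPts f = ∅)
    (hx : x ∈ homeoPart f) (hy : y ∈ fullOrbit f x) : (f ⁻¹' {y}).Subsingleton := by
  rcases hf with hinj | haper
  · exact fun a ha b hb => hinj (ha.trans hb.symm)
  obtain ⟨u, rfl, hu, horb⟩ := hx
  intro a ha b hb
  have hmem : ∀ c ∈ f ⁻¹' {y}, c ∈ range u := fun c hc =>
    horb ▸ mem_fullOrbit_of_apply_mem ((show f c = y from hc) ▸ hy)
  obtain ⟨m, rfl⟩ := hmem a ha
  obtain ⟨n, rfl⟩ := hmem b hb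
  have : u (m + 1) = u (n + 1) := by rw [← hu, ← hu, ha, hb]
  rw [add_right_cancel (injective_of_periodicPts_eq_empty hu haper this)]

lemma mem_homeoPart_of_forall_subsingleton (hsurj : Surjective f)
    (h : ∀ y ∈ fullOrbit f x, (f ⁻¹' {y}).Subsingleton) : x ∈ homeoPart f := by
  set g := surjInv hsurj
  have hfg : LeftInverse f g := rightInverse_surjInv hsurj
  let u : ℤ → X := fun n => f^[n.toNat] (g^[(-n).toNat] x)
  have hu : ∀ n, f (u n) = u (n + 1) := by
    intro n
    rcases le_or_gt 0 n with hn | hn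
    · simp only [u, show (n + 1).toNat = n.toNat + 1 by omega, show (-(n + 1)).toNat = 0 by omega,
        show (-n).toNat = 0 by omega, iterate_succ_apply']
    · simp only [u, show n.toNat = 0 by omega, show (n + 1).toNat = 0 by omega,
        show (-n).toNat = (-(n + 1)).toNat + 1 by omega, iterate_succ_apply', iterate_zero_apply,
        hfg _]
  have hu0 : u 0 = x := rfl
  exact ⟨u, hu0, hu,
    (fullOrbit_subset_range hu (hu0 ▸ h)).antisymm (hu0 ▸ range_subset_fullOrbit hu)⟩

end FullOrbit

section MinimalMap

variable {X : Type*} [TopologicalSpace X] {f : X → X}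

lemma subset_image_of_subset_closure_range_iterate [T2Space X] (hf : Continuous f) {M : Set X}
    (hM : IsCompact M) (hMf : MapsTo f M M)
    (hmin : ∀ x ∈ M, M ⊆ closure (range fun n => f^[n] x)) : M ⊆ f '' M := by
  intro y hy
  refine (hM.image hf).isClosed.closure_subset_iff.2 ?_ (hmin (f y) (hMf hy) hy)
  rintro _ ⟨n, rfl⟩
  exact ⟨f^[n] y, hMf.iterate n hy, by rw [← iterate_succ_apply' f n y, iterate_succ_apply]⟩

lemma interior_preimage_eq_empty {Y : Type*} [TopologicalSpace Y] {g : X → Y}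
    (hg : ∀ U, IsOpen U → U.Nonempty → (interior (g '' U)).Nonempty) {K : Set Y}
    (hK : interior K = ∅) : interior (g ⁻¹' K) = ∅ := by
  by_contra h
  have hsub : interior (g '' interior (g ⁻¹' K)) ⊆ interior K :=
    interior_mono ((image_mono interior_subset).trans (image_preimage_subset g K))
  exact (hg _ isOpen_interior (nonempty_iff_ne_empty.2 h)).ne_empty
    (subset_empty_iff.1 (hK ▸ hsub))

-- Semi-openness puts some `f w` with `w ∉ K` into the interior of `f '' K`, and such points can be
-- chosen with a unique preimage, which then lies both in `K` and off `K`.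
lemma interior_image_eq_empty (hf : Continuous f)
    (hopen : ∀ U, IsOpen U → U.Nonempty → (interior (f '' U)).Nonempty)
    (hS : Dense {y | (f ⁻¹' {y}).Subsingleton}) {K : Set X} (hK : IsClosed K)
    (hKint : interior K = ∅) : interior (f '' K) = ∅ := by
  by_contra h
  obtain ⟨_, hy⟩ := nonempty_iff_ne_empty.2 h
  obtain ⟨x, -, rfl⟩ := interior_subset hy
  set O := f ⁻¹' interior (f '' K)
  have hOopen : IsOpen O := isOpen_interior.preimage hf
  have hOK : ¬O ⊆ K := fun hOK => by simpa [hKint] using interior_maximal hOK hOopen hy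
  obtain ⟨_, hyV, hyS⟩ := hS.inter_open_nonempty _ isOpen_interior
    (hopen _ (hOopen.sdiff hK) (sdiff_nonempty.2 hOK))
  obtain ⟨w, ⟨hwO, hwK⟩, rfl⟩ := interior_subset hyV
  obtain ⟨a, haK, ha⟩ := interior_subset hwO
  exact hwK (hyS ha rfl ▸ haK)

variable [CompactSpace X]

lemma surjective_of_dense_range_iterate [T2Space X] (hf : Continuous f)
    (hmin : ∀ x, Dense (range fun n => f^[n] x)) : Surjective f := fun y =>
  let ⟨x, _, hx⟩ := subset_image_of_subset_closure_range_iterate hf isCompact_univ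
    (mapsTo_univ _ _) (fun x _ => (hmin x).closure_eq.ge) (mem_univ y)
  ⟨x, hx⟩

-- Every orbit enters `Kᶜ` within a bounded time `T`, while backward chains inside `K`
-- produce points whose first `T + 1` iterates all stay in `K`.
lemma eq_univ_of_image_eq_univ (hf : Continuous f) (hmin : ∀ x, Dense (range fun n => f^[n] x))
    {K : Set X} (hK : IsClosed K) (hfK : f '' K = univ) : K = univ := by
  by_contra hne
  obtain ⟨x₀, hx₀⟩ := ne_univ_iff_exists_notMem K |>.1 hne
  have hcov : univ ⊆ ⋃ n : ℕ, f^[n] ⁻¹' Kᶜ := fun x _ =>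
    let ⟨_, ⟨n, rfl⟩, hn⟩ := (hmin x).exists_mem_open hK.isOpen_compl ⟨x₀, hx₀⟩
    mem_iUnion.2 ⟨n, hn⟩
  obtain ⟨t, ht⟩ := isCompact_univ.elim_finite_subcover _
    (fun n => hK.isOpen_compl.preimage (hf.iterate n)) hcov
  choose g hgK hfg using fun y => hfK.symm ▸ mem_univ y
  obtain ⟨n, hnt, hn⟩ := mem_iUnion₂.1 (ht (mem_univ (g^[t.sup id + 1] x₀)))
  have hnT : n ≤ t.sup id := Finset.le_sup (f := id) hnt
  rw [show t.sup id + 1 = n + (t.sup id - n + 1) by omega, iterate_add_apply, iterate_succ_apply',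
    mem_preimage, LeftInverse.iterate hfg n] at hn
  exact hn (hgK _)

lemma interior_image_nonempty [T2Space X] (hf : Continuous f)
    (hmin : ∀ x, Dense (range fun n => f^[n] x)) {U : Set X} (hU : IsOpen U)
    (hne : U.Nonempty) : (interior (f '' U)).Nonempty := by
  have hcl : IsClosed (f '' Uᶜ) := (hU.isClosed_compl.isCompact.image hf).isClosed
  have hsub : (f '' Uᶜ)ᶜ ⊆ f '' U := by
    simpa using subset_image_compl (s := Uᶜ) (surjective_of_dense_range_iterate hf hmin)
  refine (nonempty_compl.2 fun h => ?_).mono (interior_maximal hsub hcl.isOpen_compl)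
  exact hne.ne_empty (compl_univ_iff.1 (eq_univ_of_image_eq_univ hf hmin hU.isClosed_compl h))

lemma interior_image_iterate_nonempty [T2Space X] (hf : Continuous f)
    (hmin : ∀ x, Dense (range fun n => f^[n] x)) (n : ℕ) {U : Set X} (hU : IsOpen U)
    (hne : U.Nonempty) : (interior (f^[n] '' U)).Nonempty := by
  induction n with
  | zero => simpa [hU.interior_eq] using hne
  | succ n ih =>
    rw [iterate_succ', image_comp]
    exact (interior_image_nonempty hf hmin isOpen_interior ih).mono
      (interior_mono (image_mono interior_subset))

lemma injective_of_mem_periodicPts [T2Space X] (hf : Continuous f)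
    (hmin : ∀ x, Dense (range fun n => f^[n] x)) {x : X} (hx : x ∈ periodicPts f) :
    Injective f := by
  obtain ⟨n, hn, hper⟩ := hx
  have hfin : (range fun k : Fin n => f^[k] x).Finite := finite_range _
  have horb : (range fun m => f^[m] x) ⊆ range fun k : Fin n => f^[k] x := by
    rintro _ ⟨m, rfl⟩
    exact ⟨⟨m % n, Nat.mod_lt _ hn⟩, hper.iterate_mod_apply m⟩
  have huniv : univ ⊆ range fun k : Fin n => f^[k] x :=
    (hmin x).closure_eq ▸ hfin.isClosed.closure_subset_iff.2 horb
  have : Finite X := finite_univ_iff.1 (hfin.subset huniv)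
  exact Finite.injective_iff_surjective.2 (surjective_of_dense_range_iterate hf hmin)

lemma injective_or_periodicPts_eq_empty [T2Space X] (hf : Continuous f)
    (hmin : ∀ x, Dense (range fun n => f^[n] x)) : Injective f ∨ periodicPts f = ∅ :=
  (periodicPts f).eq_empty_or_nonempty.symm.imp
    (fun ⟨_, hx⟩ => injective_of_mem_periodicPts hf hmin hx) id

end MinimalMap

section Residual

variable {X : Type*} [MetricSpace X] [CompactSpace X] {f : X → X}

lemma exists_isClosed_iUnion_eq_setOf_nontrivial_preimage (hf : Continuous f) :
    ∃ C : ℕ → Set X, (∀ n, IsClosed (C n)) ∧ ⋃ n, C n = {y | (f ⁻¹' {y}).Nontrivial} := by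
  refine ⟨fun n => (fun q : X × X => f q.1) '' {q | f q.1 = f q.2 ∧ 1 / (n + 1 : ℝ) ≤ dist q.1 q.2},
    fun n => ?_, ?_⟩
  · exact (((isClosed_eq (hf.comp continuous_fst) (hf.comp continuous_snd)).inter
      (isClosed_le continuous_const continuous_dist)).isCompact.image
      (hf.comp continuous_fst)).isClosed
  · ext y
    simp only [mem_iUnion, mem_image, mem_ofPred_eq, Set.Nontrivial, mem_preimage,
      mem_singleton_iff, Prod.exists]
    constructor
    · rintro ⟨n, a, b, ⟨hab, hd⟩, rfl⟩
      refine ⟨a, rfl, b, hab.symm, fun h => ?_⟩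
      subst h
      simp only [dist_self] at hd
      linarith [Nat.one_div_pos_of_nat (α := ℝ) (n := n)]
    · rintro ⟨a, ha, b, hb, hne⟩
      obtain ⟨n, hn⟩ := exists_nat_one_div_lt (dist_pos.2 hne)
      exact ⟨n, a, b, ⟨ha.trans hb.symm, hn.le⟩, ha⟩

theorem homeoPart_mem_residual (hf : Continuous f) (hmin : ∀ x, Dense (range fun n => f^[n] x))
    (hH : (homeoPart f).Nonempty) : homeoPart f ∈ residual X := by
  obtain ⟨z, hz⟩ := hH
  have hS : Dense {y | (f ⁻¹' {y}).Subsingleton} := (hmin z).mono <| range_subset_iff.2 fun n =>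
    subsingleton_preimage_of_mem_homeoPart (injective_or_periodicPts_eq_empty hf hmin) hz
      (iterate_mem_fullOrbit n)
  obtain ⟨C, hCcl, hC⟩ := exists_isClosed_iUnion_eq_setOf_nontrivial_preimage hf
  have hCint : ∀ n, interior (C n) = ∅ := fun n => by
    have hsub : C n ⊆ {y | (f ⁻¹' {y}).Subsingleton}ᶜ := fun y hy =>
      not_subsingleton_iff.2 (hC ▸ mem_iUnion_of_mem n hy : y ∈ {y | (f ⁻¹' {y}).Nontrivial})
    exact subset_empty_iff.1 (hS.interior_compl ▸ interior_mono hsub)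
  have himage : ∀ i n, IsClosed (f^[i] '' C n) ∧ interior (f^[i] '' C n) = ∅ := by
    intro i n
    induction i with
    | zero => simpa using ⟨hCcl n, hCint n⟩
    | succ i ih =>
      rw [iterate_succ', image_comp]
      exact ⟨(ih.1.isCompact.image hf).isClosed, interior_image_eq_empty hf
        (fun _ => interior_image_nonempty hf hmin) hS ih.1 ih.2⟩
  have hmeagre : IsMeagre (⋃ (i) (j) (n), f^[j] ⁻¹' (f^[i] '' C n)) :=
    isMeagre_iUnion fun i => isMeagre_iUnion fun j => isMeagre_iUnion fun n =>
      IsNowhereDense.isMeagre <| ((himage i n).1.preimage (hf.iterate j)).isNowhereDense_iff.2 <|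
        interior_preimage_eq_empty (fun _ => interior_image_iterate_nonempty hf hmin j)
          (himage i n).2
  refine Filter.mem_of_superset hmeagre fun x hx => mem_homeoPart_of_forall_subsingleton
    (surjective_of_dense_range_iterate hf hmin) fun y ⟨i, j, hij⟩ => ?_
  by_contra hy
  obtain ⟨n, hn⟩ := mem_iUnion.1 (hC ▸ not_subsingleton_iff.1 hy : y ∈ ⋃ n, C n)
  exact hx (by simp only [mem_iUnion]; exact ⟨i, j, n, y, hn, hij⟩)

end Residual

section Fibres

lemma isOpen_setOf_inter_preimage_singleton_subset {E B : Type*} [TopologicalSpace E]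
    [TopologicalSpace B] [T2Space B] {p : E → B} (hp : Continuous p) {M V : Set E}
    (hM : IsCompact M) (hV : IsOpen V) : IsOpen {b | M ∩ p ⁻¹' {b} ⊆ V} := by
  have : {b | M ∩ p ⁻¹' {b} ⊆ V} = (p '' (M \ V))ᶜ := by
    ext b
    simp only [mem_ofPred_eq, mem_compl_iff, mem_image, mem_sdiff, subset_def, mem_inter_iff,
      mem_preimage, mem_singleton_iff, not_exists, not_and]
    exact forall_congr' fun e => by tauto
  rw [this]
  exact ((hM.diff hV).image hp).isClosed.isOpen_compl

lemma Finset.exists_pos_forall_lt_dist {X : Type*} [MetricSpace X] (t : Finset X) :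
    ∃ ε > 0, ∀ x ∈ t, ∀ y ∈ t, x ≠ y → ε < dist x y := by
  have h : ∀ᶠ ε in 𝓝[>] (0 : ℝ), ∀ q ∈ t.offDiag, ε < dist q.1 q.2 :=
    (Filter.eventually_all_finset _).2 fun q hq =>
      nhdsWithin_le_nhds (eventually_lt_nhds (dist_pos.2 (Finset.mem_offDiag.1 hq).2.2))
  obtain ⟨ε, hε, hεpos⟩ := (h.and self_mem_nhdsWithin).exists
  exact ⟨ε, hεpos, fun x hx y hy hxy => hε (x, y) (Finset.mem_offDiag.2 ⟨hx, hy, hxy⟩)⟩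

lemma encard_le_of_forall_subset_biUnion_ball {X : Type*} [MetricSpace X] {A : Set X} {N : ℕ}
    (h : ∀ ε > 0, ∃ s : Finset X, s.card ≤ N ∧ A ⊆ ⋃ x ∈ s, Metric.ball x ε) : A.encard ≤ N := by
  have hcard : ∀ t : Finset X, ↑t ⊆ A → t.card ≤ N := by
    intro t htA
    obtain ⟨ε, hε, hsep⟩ := t.exists_pos_forall_lt_dist
    obtain ⟨s, hsN, hA⟩ := h (ε / 2) (half_pos hε)
    have hcenter : ∀ x ∈ t, ∃ c ∈ s, dist x c < ε / 2 := fun x hx => by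
      simpa [Metric.mem_ball] using hA (htA hx)
    choose! c hcs hcdist using hcenter
    refine (Finset.card_le_card_of_injOn c hcs fun x hx y hy hxy => ?_).trans hsN
    by_contra hne
    have := dist_triangle_right x y (c x)
    linarith [hsep x hx y hy hne, hcdist x hx, hcdist y hy, hxy ▸ hcdist y hy]
  by_contra! hlt
  obtain ⟨t, htA, htcard⟩ := exists_subset_encard_eq (Order.add_one_le_of_lt hlt)
  rw [← Nat.cast_succ] at htcard
  have htfin : t.Finite := finite_of_encard_eq_coe htcard
  have := hcard htfin.toFinset (by simpa using htA)
  rw [← Nat.cast_le (α := ℕ∞), ← htfin.encard_eq_coe_toFinset_card, htcard, Nat.cast_le] at this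
  omega

lemma isGδ_setOf_encard_inter_preimage_singleton_le {E B : Type*} [MetricSpace E]
    [TopologicalSpace B] [T2Space B] {p : E → B} (hp : Continuous p) {M : Set E}
    (hM : IsCompact M) (N : ℕ) : IsGδ {b | (M ∩ p ⁻¹' {b}).encard ≤ N} := by
  have : {b | (M ∩ p ⁻¹' {b}).encard ≤ N} = ⋂ j : ℕ, ⋃ s : Finset E, ⋃ (_ : s.card ≤ N),
      {b | M ∩ p ⁻¹' {b} ⊆ ⋃ x ∈ s, Metric.ball x (1 / (j + 1))} := by
    ext b
    simp only [mem_ofPred_eq, mem_iInter, mem_iUnion, exists_prop]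
    constructor
    · intro hb j
      obtain ⟨hfin, hncard⟩ := encard_le_coe_iff_finite_ncard_le.1 hb
      refine ⟨hfin.toFinset, by rwa [← ncard_eq_toFinset_card _ hfin], fun e he => ?_⟩
      exact mem_biUnion (hfin.mem_toFinset.2 he) (Metric.mem_ball_self Nat.one_div_pos_of_nat)
    · intro hb
      refine encard_le_of_forall_subset_biUnion_ball fun ε hε => ?_
      obtain ⟨j, hj⟩ := exists_nat_one_div_lt hε
      obtain ⟨s, hsN, hs⟩ := hb j
      exact ⟨s, hsN, hs.trans (biUnion_mono subset_rfl fun x _ => Metric.ball_subset_ball hj.le)⟩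
  rw [this]
  exact IsGδ.iInter_of_isOpen fun j => isOpen_iUnion fun s => isOpen_iUnion fun _ =>
    isOpen_setOf_inter_preimage_singleton_subset hp hM
      (isOpen_biUnion fun _ _ => Metric.isOpen_ball)

lemma inter_preimage_apply_subset_image {E B : Type*} {p : E → B} {F : E → E} {f : B → B}
    (hcomm : p ∘ F = f ∘ p) {M : Set E} (hM : M ⊆ F '' M) {x : B}
    (hx : (f ⁻¹' {f x}).Subsingleton) : M ∩ p ⁻¹' {f x} ⊆ F '' (M ∩ p ⁻¹' {x}) := by
  rintro e ⟨heM, hpe⟩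
  obtain ⟨e', he'M, rfl⟩ := hM heM
  have : f (p e') = f x := (congrFun hcomm e').symm.trans hpe
  exact ⟨e', ⟨he'M, hx this rfl⟩, rfl⟩

end Fibres

theorem typical_fibre_cardinality_eq_min_over_homeoPart_general
    {E B : Type*} [MetricSpace E] [CompactSpace E] [MetricSpace B] [CompactSpace B]
    (p : E → B) (hp : Continuous p)
    (f : B → B) (hf : Continuous f)
    (hfmin : ∀ b : B, Dense (Set.range fun n => f^[n] b))
    (F : E → E) (hF : Continuous F) (hcomm : p ∘ F = f ∘ p)
    (M : Set E) (hMcl : IsClosed M)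
    (hMinv : Set.MapsTo F M M)
    (hMmin : ∀ x ∈ M, M ⊆ closure (Set.range fun n => F^[n] x))
    (hproj : p '' M = Set.univ)
    (z : B) (hz : z ∈ homeoPart f) (hfin : (M ∩ p ⁻¹' {z}).Finite) :
    ∃ N : ℕ, 0 < N ∧ (N : ℕ∞) = ⨅ x ∈ homeoPart f, (M ∩ p ⁻¹' {x}).encard ∧
      ∃ R ∈ residual B, ∀ b ∈ R, (M ∩ p ⁻¹' {b}).encard = N := by
  have hMF := subset_image_of_subset_closure_range_iterate hF hMcl.isCompact hMinv hMmin
  have hle : ∀ x ∈ homeoPart f, (M ∩ p ⁻¹' {f x}).encard ≤ (M ∩ p ⁻¹' {x}).encard :=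
    fun x hx => (encard_le_encard <| inter_preimage_apply_subset_image hcomm hMF <|
      subsingleton_preimage_of_mem_homeoPart (injective_or_periodicPts_eq_empty hf hfmin) hx
        (iterate_mem_fullOrbit 1)).trans (encard_image_le _ _)
  obtain ⟨x₀, hx₀, hx₀min⟩ : ∃ x₀ ∈ homeoPart f,
      ∀ x ∈ homeoPart f, (M ∩ p ⁻¹' {x₀}).encard ≤ (M ∩ p ⁻¹' {x}).encard :=
    ⟨_, argminOn_mem _ _ ⟨z, hz⟩, fun x hx => argminOn_le (fun x => (M ∩ p ⁻¹' {x}).encard) _ hx⟩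
  have hfin₀ : (M ∩ p ⁻¹' {x₀}).Finite :=
    encard_lt_top_iff.1 ((hx₀min z hz).trans_lt (encard_lt_top_iff.2 hfin))
  set N := (M ∩ p ⁻¹' {x₀}).ncard
  have hN : (M ∩ p ⁻¹' {x₀}).encard = N := hfin₀.cast_ncard_eq.symm
  have horbit : ∀ n, f^[n] x₀ ∈ homeoPart f ∧ (M ∩ p ⁻¹' {f^[n] x₀}).encard ≤ N := by
    intro n
    induction n with
    | zero => exact ⟨hx₀, hN.le⟩
    | succ n ih =>
      rw [iterate_succ_apply']
      exact ⟨apply_mem_homeoPart ih.1, (hle _ ih.1).trans ih.2⟩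
  have hG : {b | (M ∩ p ⁻¹' {b}).encard ≤ N} ∈ residual B :=
    residual_of_dense_Gδ (isGδ_setOf_encard_inter_preimage_singleton_le hp hMcl.isCompact N)
      ((hfmin x₀).mono (range_subset_iff.2 fun n => (horbit n).2))
  have hNpos : 0 < N := by
    obtain ⟨e, heM, hpe⟩ := hproj ▸ mem_univ x₀
    exact (ncard_pos hfin₀).2 ⟨e, heM, hpe⟩
  refine ⟨N, hNpos, le_antisymm (le_iInf₂ fun x hx => hN ▸ hx₀min x hx)
    ((iInf₂_le x₀ hx₀).trans_eq hN), homeoPart f ∩ {b | (M ∩ p ⁻¹' {b}).encard ≤ N},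
    Filter.inter_mem (homeoPart_mem_residual hf hfmin ⟨z, hz⟩) hG,
    fun b hb => le_antisymm hb.2 (hN ▸ hx₀min b hb.1)⟩

/-- If some fibre of a minimal set `M` (with full projection) over a point of
the homeo-part `H` of the minimal base is finite, then `N = min {card M_x : x ∈ H}` is a
positive integer and the fibre of `M` over every point of some residual subset of the base
has cardinality exactly `N`. -/
theorem typical_fibre_cardinality_eq_min_over_homeoPart
    {E B : Type*} [MetricSpace E] [CompactSpace E] [MetricSpace B] [CompactSpace B]
    (p : E → B) (hp : Continuous p) (hps : Function.Surjective p)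
    (f : B → B) (hf : Continuous f)
    (hfmin : ∀ b : B, Dense (Set.range fun n => f^[n] b))
    (F : E → E) (hF : Continuous F) (hcomm : p ∘ F = f ∘ p)
    (M : Set E) (hMne : M.Nonempty) (hMcl : IsClosed M)
    (hMinv : Set.MapsTo F M M)
    (hMmin : ∀ x ∈ M, M ⊆ closure (Set.range fun n => F^[n] x))
    (hproj : p '' M = Set.univ)
    (z : B) (hz : z ∈ homeoPart f) (hfin : (M ∩ p ⁻¹' {z}).Finite) :
    ∃ N : ℕ, 0 < N ∧ (N : ℕ∞) = ⨅ x ∈ homeoPart f, (M ∩ p ⁻¹' {x}).encard ∧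
      ∃ R ∈ residual B, ∀ b ∈ R, (M ∩ p ⁻¹' {b}).encard = N :=
  typical_fibre_cardinality_eq_min_over_homeoPart_general p hp f hf hfmin F hF hcomm M hMcl hMinv
    hMmin hproj z hz hfin
end

section
/- Let X be a compact metric space, f : X → X a continuous minimal map, H the homeo-part of (X, f), and P a residual subset of X. Then there exists a set R ⊆ P ∩ H such that: (1) R is residual in X; (2) f(R) = R = f⁻¹(R); (3) f restricted to R is a bijection of R onto itself, and for every x ∈ R both the forward f-orbit of x and the backward orbit {y ∈ R : f^n(y) = x for some n ≥ 0} are dense in X. -/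
/-!
A minimal map `f` of a compact space is surjective and irreducible: no proper closed set maps
onto the whole space. Hence for every nonempty open `U` some nonempty open `W` has
`f ⁻¹' W ⊆ U`, so images and preimages of residual sets are residual, and (in a metric space)
the points with at most one preimage form a residual set. Intersecting the preimages
`f^[n] ⁻¹' (P ∩ {single preimage})` and then the images of the result gives a residual `R` with
`f ⁻¹' R = R` on which `f` is injective. A two-sided orbit inside `R` is then the whole grand
orbit of its points, and its backward half is dense because its set of accumulation points is
closed, nonempty and forward invariant.
-/
open Set Topology

def IsMinimalMap {X : Type*} [TopologicalSpace X] (f : X → X) : Prop :=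
  ∀ x, Dense (range fun n => f^[n] x)

namespace IsMinimalMap

variable {X : Type*} [TopologicalSpace X] {f : X → X}

theorem eq_univ_of_isClosed (hmin : IsMinimalMap f) {A : Set X} (hA : IsClosed A)
    (hne : A.Nonempty) (hAf : MapsTo f A A) : A = univ := by
  obtain ⟨a, ha⟩ := hne
  have horbit : closure (range fun n => f^[n] a) ⊆ A :=
    closure_minimal (range_subset_iff.2 fun n => hAf.iterate n ha) hA
  rwa [(hmin a).closure_eq, univ_subset_iff] at horbit

theorem surjective [CompactSpace X] [T2Space X] (hmin : IsMinimalMap f) (hf : Continuous f) :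
    Function.Surjective f := fun y => by
  have hrange : range f = univ :=
    hmin.eq_univ_of_isClosed (isCompact_range hf).isClosed ⟨f y, mem_range_self y⟩
      fun _ _ => mem_range_self _
  exact (hrange ▸ mem_univ y : y ∈ range f)

/-- The set of accumulation points of a backward orbit is closed, nonempty and forward
invariant, hence everything. -/
theorem dense_range_of_backward_orbit [CompactSpace X] (hmin : IsMinimalMap f)
    (hf : Continuous f) {u : ℕ → X} (hu : ∀ k, f (u (k + 1)) = u k) : Dense (range u) := by
  set T : ℕ → Set X := fun N => closure (u '' Ici N)
  have hT_closed : ∀ N, IsClosed (T N) := fun N => isClosed_closure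
  have hT_succ : ∀ N, f '' T (N + 1) ⊆ T N := by
    refine fun N => (image_closure_subset_closure_image hf).trans (closure_mono ?_)
    rintro _ ⟨_, ⟨k, hk, rfl⟩, rfl⟩
    obtain ⟨j, rfl⟩ : ∃ j, k = j + 1 := ⟨k - 1, by simp only [mem_Ici] at hk; omega⟩
    exact ⟨j, by simpa using hk, (hu j).symm⟩
  have hlim : (⋂ N, T N) = univ := by
    refine hmin.eq_univ_of_isClosed (isClosed_iInter hT_closed) ?_ ?_
    · exact (hT_closed 0).isCompact.nonempty_iInter_of_sequence_nonempty_isCompact_isClosed T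
          (fun N => closure_mono (image_mono (Ici_subset_Ici.2 N.le_succ)))
          (fun N => ⟨u N, subset_closure ⟨N, self_mem_Ici, rfl⟩⟩) hT_closed
    · exact fun z hz => mem_iInter.2 fun N =>
        hT_succ N (mem_image_of_mem f (mem_iInter.1 hz (N + 1)))
  rw [dense_iff_closure_eq, eq_univ_iff_forall]
  intro x
  have hx : x ∈ T 0 := mem_iInter.1 (hlim ▸ mem_univ x) 0
  exact closure_mono (image_subset_range _ _) hx

theorem eq_univ_of_image_eq_univ [CompactSpace X] (hmin : IsMinimalMap f) (hf : Continuous f)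
    {K : Set X} (hK : IsClosed K) (hKf : f '' K = univ) : K = univ := by
  choose g hgK hfg using fun y => (hKf ▸ mem_univ y : y ∈ f '' K)
  refine eq_univ_of_forall fun x => ?_
  set u : ℕ → X := fun k => g^[k + 1] x
  have hu : ∀ k, f (u (k + 1)) = u k := fun k => by
    simp only [u, Function.iterate_succ_apply' g (k + 1), hfg]
  have huK : range u ⊆ K := range_subset_iff.2 fun k => by
    simp only [u, Function.iterate_succ_apply']
    exact hgK _
  have hx : x ∈ closure (range u) :=
    (hmin.dense_range_of_backward_orbit hf hu).closure_eq ▸ mem_univ x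
  exact closure_minimal huK hK hx

theorem exists_isOpen_preimage_subset [CompactSpace X] [T2Space X] (hmin : IsMinimalMap f)
    (hf : Continuous f) {U : Set X} (hU : IsOpen U) (hne : U.Nonempty) :
    ∃ W, IsOpen W ∧ W.Nonempty ∧ f ⁻¹' W ⊆ U := by
  refine ⟨(f '' Uᶜ)ᶜ, (hU.isClosed_compl.isCompact.image hf).isClosed.isOpen_compl, ?_, ?_⟩
  · refine nonempty_compl.2 fun h => hne.ne_empty ?_
    exact compl_univ_iff.1 (hmin.eq_univ_of_image_eq_univ hf hU.isClosed_compl h)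
  · exact fun y hy => by_contra fun hyU => hy (mem_image_of_mem f hyU)

variable [CompactSpace X] [T2Space X]

theorem dense_preimage (hmin : IsMinimalMap f) (hf : Continuous f) {D : Set X} (hD : Dense D) :
    Dense (f ⁻¹' D) := by
  refine dense_iff_inter_open.2 fun U hU hne => ?_
  obtain ⟨W, hWo, hWne, hWU⟩ := hmin.exists_isOpen_preimage_subset hf hU hne
  obtain ⟨x, hxD, hxW⟩ := hD.exists_mem_open hWo hWne
  obtain ⟨y, rfl⟩ := hmin.surjective hf x
  exact ⟨y, hWU hxW, hxD⟩

theorem dense_compl_image_compl (hmin : IsMinimalMap f) (hf : Continuous f) {t : Set X}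
    (ht : IsOpen t) (hd : Dense t) : Dense (f '' tᶜ)ᶜ := by
  have hsurj := hmin.surjective hf
  refine dense_iff_inter_open.2 fun U hU hne => ?_
  have hV : (f ⁻¹' U ∩ t).Nonempty :=
    hd.inter_open_nonempty _ (hU.preimage hf) (hsurj.nonempty_preimage.2 hne)
  obtain ⟨W, hWo, ⟨z, hzW⟩, hWV⟩ :=
    hmin.exists_isOpen_preimage_subset hf ((hU.preimage hf).inter ht) hV
  have hWU : W ⊆ U := hsurj.preimage_subset_preimage_iff.1 (hWV.trans inter_subset_left)
  refine ⟨z, hWU hzW, ?_⟩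
  rintro ⟨y, hyt, rfl⟩
  exact hyt (hWV hzW).2

theorem tendsto_residual (hmin : IsMinimalMap f) (hf : Continuous f) :
    Filter.Tendsto f (residual X) (residual X) := by
  refine Filter.le_countableGenerate_iff_of_countableInterFilter.2 fun t ⟨ht, hd⟩ => ?_
  exact residual_of_dense_open (ht.preimage hf) (hmin.dense_preimage hf hd)

theorem image_mem_residual (hmin : IsMinimalMap f) (hf : Continuous f) {s : Set X}
    (hs : s ∈ residual X) : f '' s ∈ residual X := by
  obtain ⟨S, hSo, hSd, hSc, hSs⟩ := mem_residual_iff.1 hs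
  have hsub : (⋂ t ∈ S, (f '' tᶜ)ᶜ) ⊆ f '' s := by
    intro x hx
    obtain ⟨y, rfl⟩ := hmin.surjective hf x
    refine mem_image_of_mem f (hSs (mem_sInter.2 fun t ht => by_contra fun hyt => ?_))
    exact mem_iInter₂.1 hx t ht (mem_image_of_mem f hyt)
  refine Filter.mem_of_superset ((countable_bInter_mem hSc).2 fun t ht => ?_) hsub
  have hopen : IsOpen (f '' tᶜ)ᶜ :=
    ((hSo t ht).isClosed_compl.isCompact.image hf).isClosed.isOpen_compl
  exact residual_of_dense_open hopen (hmin.dense_compl_image_compl hf (hSo t ht) (hSd t ht))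

theorem map_residual (hmin : IsMinimalMap f) (hf : Continuous f) :
    Filter.map f (residual X) = residual X :=
  le_antisymm (hmin.tendsto_residual hf) (Filter.le_map fun _ => hmin.image_mem_residual hf)

theorem map_iterate_residual (hmin : IsMinimalMap f) (hf : Continuous f) (n : ℕ) :
    Filter.map f^[n] (residual X) = residual X := by
  induction n with
  | zero => exact Filter.map_id
  | succ n ih => rw [Function.iterate_succ, ← Filter.map_map, hmin.map_residual hf, ih]

end IsMinimalMap

namespace IsMinimalMap

variable {X : Type*} [MetricSpace X] [CompactSpace X] {f : X → X}

theorem isNowhereDense_setOf_le_dist (hmin : IsMinimalMap f) (hf : Continuous f) {ε : ℝ}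
    (hε : 0 < ε) : IsNowhereDense {x | ∃ y z, f y = x ∧ f z = x ∧ ε ≤ dist y z} := by
  set E := {x | ∃ y z, f y = x ∧ f z = x ∧ ε ≤ dist y z}
  have hsurj := hmin.surjective hf
  refine eq_empty_of_forall_notMem fun x₀ hx₀ => ?_
  set U := interior (closure E)
  obtain ⟨y₀, hy₀⟩ := hsurj.nonempty_preimage.2 ⟨x₀, hx₀⟩
  -- the fibres over `W` have diameter less than `ε`, so `W` misses `E`
  obtain ⟨W, hWo, ⟨w, hwW⟩, hWV⟩ := hmin.exists_isOpen_preimage_subset hf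
    ((isOpen_interior.preimage hf).inter Metric.isOpen_ball)
    ⟨y₀, hy₀, Metric.mem_ball_self (half_pos hε)⟩
  have hWU : W ⊆ U := hsurj.preimage_subset_preimage_iff.1 (hWV.trans inter_subset_left)
  obtain ⟨x, hxW, y, z, rfl, hzy, hyz⟩ :=
    mem_closure_iff.1 (interior_subset (hWU hwW)) W hWo hwW
  have hy := (hWV hxW).2
  have hz := (hWV (show f z ∈ W from hzy ▸ hxW)).2
  rw [Metric.mem_ball] at hy hz
  linarith [dist_triangle_right y z y₀]

theorem setOf_subsingleton_preimage_mem_residual (hmin : IsMinimalMap f) (hf : Continuous f) :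
    {x | (f ⁻¹' {x}).Subsingleton} ∈ residual X := by
  have hmeagre : IsMeagre (⋃ m : ℕ,
      {x | ∃ y z, f y = x ∧ f z = x ∧ 1 / ((m : ℝ) + 1) ≤ dist y z}) :=
    isMeagre_iUnion fun m => (hmin.isNowhereDense_setOf_le_dist hf m.one_div_pos_of_nat).isMeagre
  refine Filter.mem_of_superset hmeagre (compl_subset_comm.1 fun x hx => ?_)
  obtain ⟨y, hy, z, hz, hyz⟩ := not_subsingleton_iff.1 hx
  obtain ⟨m, hm⟩ := exists_nat_one_div_lt (dist_pos.2 hyz)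
  exact mem_iUnion.2 ⟨m, y, z, hy, hz, hm.le⟩

end IsMinimalMap

section Orbits

variable {X : Type*} {f : X → X}

theorem preimage_iInter_image_iterate_eq {B : Set X} (hB : MapsTo f B B)
    (hfib : ∀ x ∈ B, (f ⁻¹' {x}).Subsingleton) :
    f ⁻¹' (⋂ n : ℕ, f^[n] '' B) = ⋂ n : ℕ, f^[n] '' B := by
  have hsucc : ∀ n, f^[n + 1] '' B = f '' (f^[n] '' B) := fun n => by
    rw [Function.iterate_succ', image_comp]
  have hB0 : (⋂ n : ℕ, f^[n] '' B) ⊆ B := fun x hx => by simpa using mem_iInter.1 hx 0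
  refine Subset.antisymm (fun y hy => mem_iInter.2 fun n => ?_) fun x hx => mem_iInter.2 ?_
  · obtain ⟨y', hy', hfy'⟩ := hsucc n ▸ mem_iInter.1 hy (n + 1)
    rwa [hfib _ (hB0 hy) hfy' rfl] at hy'
  · rintro (_ | n)
    · simpa using hB (hB0 hx)
    · exact hsucc n ▸ mem_image_of_mem f (mem_iInter.1 hx n)

theorem Set.BijOn.exists_orbit {R : Set X} (h : BijOn f R R) {x : X} (hx : x ∈ R) :
    ∃ u : ℤ → X, u 0 = x ∧ (∀ n, f (u n) = u (n + 1)) ∧ ∀ n, u n ∈ R := by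
  refine ⟨fun n => ((h.equiv f ^ n) ⟨x, hx⟩ : X), rfl, fun n => ?_, fun n => Subtype.prop _⟩
  change f _ = ((h.equiv f ^ (n + 1)) ⟨x, hx⟩ : X)
  rw [add_comm, zpow_one_add, Equiv.Perm.mul_apply]
  rfl

theorem iterate_apply_of_orbit {u : ℤ → X} (hu : ∀ n, f (u n) = u (n + 1)) (k : ℕ)
    (n : ℤ) : f^[k] (u n) = u (n + k) := by
  induction k with
  | zero => simp
  | succ k ih =>
    rw [Function.iterate_succ_apply', ih, hu]
    push_cast
    ring_nf

theorem mem_homeoPart_of_orbit {R : Set X} (hR : f ⁻¹' R ⊆ R) (hinj : InjOn f R)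
    {u : ℤ → X} (hu : ∀ n, f (u n) = u (n + 1)) (huR : ∀ n, u n ∈ R) :
    u 0 ∈ homeoPart f := by
  have hback : ∀ (i : ℕ) (y : X) (n : ℤ), f^[i] y = u (n + i) → y = u n := by
    intro i
    induction i with
    | zero => simp
    | succ i ih =>
      intro y n hy
      rw [Function.iterate_succ_apply, show n + (i + 1 : ℕ) = n + 1 + i by push_cast; ring] at hy
      have hfy : f y = u (n + 1) := ih _ _ hy
      exact hinj (hR (show f y ∈ R from hfy ▸ huR _)) (huR n) (hfy.trans (hu n).symm)
  refine ⟨u, rfl, hu, Subset.antisymm ?_ ?_⟩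
  · rintro y ⟨i, j, hij⟩
    refine ⟨j - i, (hback i y _ ?_).symm⟩
    rw [hij, iterate_apply_of_orbit hu, sub_add_cancel, zero_add]
  · rintro _ ⟨m, rfl⟩
    refine ⟨(-m).toNat, m.toNat, ?_⟩
    rw [iterate_apply_of_orbit hu, iterate_apply_of_orbit hu]
    congr 1
    omega

end Orbits

theorem IsMinimalMap.dense_setOf_iterate_eq {X : Type*} [TopologicalSpace X] [CompactSpace X]
    {f : X → X} (hmin : IsMinimalMap f) (hf : Continuous f) {R : Set X} {u : ℤ → X}
    (hu : ∀ n, f (u n) = u (n + 1)) (huR : ∀ n, u n ∈ R) :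
    Dense {y | y ∈ R ∧ ∃ n : ℕ, f^[n] y = u 0} := by
  have hback : ∀ k : ℕ, f (u (-(k + 1 : ℕ))) = u (-k) := fun k => by
    rw [hu]; push_cast; ring_nf
  refine (hmin.dense_range_of_backward_orbit hf (u := fun k : ℕ => u (-k)) hback).mono ?_
  rintro _ ⟨k, rfl⟩
  exact ⟨huR _, k, by rw [iterate_apply_of_orbit hu, neg_add_cancel]⟩

/-- Given a continuous minimal map `f` of a compact metric space with
homeo-part `H` and a residual set `P`, there is a residual set `R ⊆ P ∩ H` which is fully
invariant, on which `f` restricts to a bijection, and such that the forward and backward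
orbits (within `R`) of every point of `R` are dense in `X`. -/
theorem exists_invariant_residual_subset_of_homeoPart
    {X : Type*} [MetricSpace X] [CompactSpace X]
    (f : X → X) (hf : Continuous f)
    (hmin : ∀ x : X, Dense (Set.range fun n => f^[n] x))
    (P : Set X) (hP : P ∈ residual X) :
    ∃ R : Set X, R ⊆ P ∩ homeoPart f ∧ R ∈ residual X ∧
      f '' R = R ∧ f ⁻¹' R = R ∧ Set.BijOn f R R ∧
      (∀ x ∈ R, Dense (Set.range fun n => f^[n] x)) ∧
      (∀ x ∈ R, Dense {y | y ∈ R ∧ ∃ n : ℕ, f^[n] y = x}) := by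
  have hmin : IsMinimalMap f := hmin
  set S := {x | (f ⁻¹' {x}).Subsingleton}
  set B := ⋂ n : ℕ, f^[n] ⁻¹' (P ∩ S)
  set R := ⋂ n : ℕ, f^[n] '' B
  have hB : B ∈ residual X := countable_iInter_mem.2 fun n => by
    rw [← Filter.mem_map, hmin.map_iterate_residual hf]
    exact Filter.inter_mem hP (hmin.setOf_subsingleton_preimage_mem_residual hf)
  have hBf : MapsTo f B B := fun x hx => mem_iInter.2 fun n => by
    simpa only [mem_preimage, Function.iterate_succ_apply] using mem_iInter.1 hx (n + 1)
  have hBPS : B ⊆ P ∩ S := fun x hx => by simpa using mem_iInter.1 hx 0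
  have hRB : R ⊆ B := fun x hx => by simpa using mem_iInter.1 hx 0
  have hpre : f ⁻¹' R = R := preimage_iInter_image_iterate_eq hBf fun x hx => (hBPS hx).2
  have himage : f '' R = R := by
    conv_lhs => rw [← hpre]
    exact image_preimage_eq R (hmin.surjective hf)
  have hinj : InjOn f R := fun x hx _ _ hxy => (hBPS (hRB (hpre.superset hx))).2 rfl hxy.symm
  have hbij : BijOn f R R := ⟨hpre.superset, hinj, himage.superset⟩
  refine ⟨R, fun x hx => ⟨(hBPS (hRB hx)).1, ?_⟩,
    countable_iInter_mem.2 fun n => hmin.map_iterate_residual hf n ▸ Filter.image_mem_map hB,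
    himage, hpre, hbij, fun x _ => hmin x, fun x hx => ?_⟩
  all_goals
    obtain ⟨u, rfl, hu, huR⟩ := hbij.exists_orbit hx
  · exact mem_homeoPart_of_orbit hpre.subset hinj hu huR
  · exact hmin.dense_setOf_iterate_eq hf hu huR
end

section
/- Let X be a compact metric space and f : X → X a continuous map. Suppose there exists a redundant open set for f, i.e. a nonempty open set G ⊆ X with f(G) ⊆ f(X \ G). Then the system (X, f) is not minimal. -/
/-!
A minimal map of a compact Hausdorff space is surjective, since its range is closed and contains
a dense orbit. Then `f(G) ⊆ f(Gᶜ)` gives `f(Gᶜ) = X`, so every point of the closed set `Gᶜ` has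
a preimage in `Gᶜ`. By compactness the nested closed sets of points whose first `n` iterates stay
in `Gᶜ` have a common point, whose whole orbit misses the nonempty open set `G`.
-/

open Set Function

section

variable {X : Type*} {f : X → X}

lemma Function.Surjective.image_compl_eq_univ (hf : Surjective f) {G : Set X}
    (hG : f '' G ⊆ f '' Gᶜ) : f '' Gᶜ = univ := by
  rw [← image_univ_of_surjective hf, ← union_compl_self G, image_union, union_eq_right.mpr hG]

def iterateStaysIn (f : X → X) (F : Set X) (n : ℕ) : Set X := ⋂ k ≤ n, f^[k] ⁻¹' F

lemma iterateStaysIn_zero (F : Set X) : iterateStaysIn f F 0 = F := by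
  simp [iterateStaysIn]

lemma iterateStaysIn_succ (F : Set X) (n : ℕ) :
    iterateStaysIn f F (n + 1) = F ∩ f ⁻¹' iterateStaysIn f F n := by
  ext x
  simp only [iterateStaysIn, mem_iInter, mem_inter_iff, mem_preimage, ← Nat.lt_succ_iff,
    Nat.forall_lt_succ_left, iterate_zero_apply, iterate_succ_apply]

lemma iterateStaysIn_succ_subset (F : Set X) (n : ℕ) :
    iterateStaysIn f F (n + 1) ⊆ iterateStaysIn f F n :=
  biInter_subset_biInter_left fun _ hk => le_trans hk n.le_succ

lemma iterateStaysIn_subset (F : Set X) (n : ℕ) : iterateStaysIn f F n ⊆ F :=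
  iInter₂_subset 0 n.zero_le

lemma image_iterateStaysIn_succ {F : Set X} (hsurj : SurjOn f F F) (n : ℕ) :
    f '' iterateStaysIn f F (n + 1) = iterateStaysIn f F n := by
  rw [iterateStaysIn_succ, image_inter_preimage, inter_eq_right]
  exact (iterateStaysIn_subset F n).trans hsurj

lemma Set.SurjOn.iterateStaysIn_nonempty {F : Set X} (hsurj : SurjOn f F F) (hne : F.Nonempty)
    (n : ℕ) : (iterateStaysIn f F n).Nonempty := by
  induction n with
  | zero => rwa [iterateStaysIn_zero]
  | succ n ih => exact (image_iterateStaysIn_succ hsurj n ▸ ih).of_image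

variable [TopologicalSpace X]

lemma Continuous.isClosed_iterateStaysIn (hf : Continuous f) {F : Set X} (hF : IsClosed F)
    (n : ℕ) : IsClosed (iterateStaysIn f F n) :=
  isClosed_biInter fun k _ => hF.preimage (hf.iterate k)

lemma Continuous.surjective_of_dense_orbit [CompactSpace X] [T2Space X] (hf : Continuous f)
    {x : X} (hx : Dense (range fun n => f^[n] (f x))) : Surjective f := by
  have horbit : range (fun n => f^[n] (f x)) ⊆ range f := by
    rintro _ ⟨n, rfl⟩
    exact ⟨f^[n] x, (iterate_succ_apply' f n x).symm⟩
  have hdense : Dense (range f) := hx.mono horbit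
  exact range_eq_univ.mp ((isCompact_range hf).isClosed.closure_eq ▸ hdense.closure_eq)

lemma Set.SurjOn.exists_forall_iterate_mem [CompactSpace X] (hf : Continuous f) {F : Set X}
    (hF : IsClosed F) (hne : F.Nonempty) (hsurj : SurjOn f F F) :
    ∃ x, ∀ n, f^[n] x ∈ F := by
  have hclosed := hf.isClosed_iterateStaysIn hF
  obtain ⟨x, hx⟩ := IsCompact.nonempty_iInter_of_sequence_nonempty_isCompact_isClosed _
    (iterateStaysIn_succ_subset F) (hsurj.iterateStaysIn_nonempty hne) (hclosed 0).isCompact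
    hclosed
  exact ⟨x, fun n => mem_iInter₂.mp (mem_iInter.mp hx n) n le_rfl⟩

end

/-- If a continuous selfmap of a compact metric space has a redundant open set
(a nonempty open `G` with `f(G) ⊆ f(X \ G)`), then it is not minimal. -/
theorem not_minimal_of_redundant_open_set
    {X : Type*} [MetricSpace X] [CompactSpace X]
    (f : X → X) (hf : Continuous f)
    (G : Set X) (hGne : G.Nonempty) (hGopen : IsOpen G)
    (hred : f '' G ⊆ f '' Gᶜ) :
    ¬ ∀ x : X, Dense (Set.range fun n => f^[n] x) := by
  intro hmin
  have hfG : f '' Gᶜ = univ :=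
    (hf.surjective_of_dense_orbit (hmin (f hGne.some))).image_compl_eq_univ hred
  have hGc : Gᶜ.Nonempty := ((hGne.image f).mono hred).of_image
  have hsurj : SurjOn f Gᶜ Gᶜ := fun y _ => hfG ▸ mem_univ y
  obtain ⟨x, hx⟩ := hsurj.exists_forall_iterate_mem hf hGopen.isClosed_compl hGc
  obtain ⟨_, hxG, n, rfl⟩ := (hmin x).inter_open_nonempty G hGopen hGne
  exact hx n hxG
end

section
/- Let X be a compact metric space and f : X → X a continuous minimal map. Then f is almost one-to-one: the set {x ∈ X : f⁻¹({x}) is a singleton} is a dense Gδ subset of X. -/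
/-!
A minimal map `f` of a compact space is irreducible: no proper closed set `A` has `f '' A = X`,
for otherwise a point whose whole forward orbit stays in `A` exists by compactness, and its orbit
cannot be dense. Now let `A_ε` be the set of points whose preimages are pairwise `ε`-close; it is
open by compactness. If `A_ε` missed a nonempty open `V`, remove from `X` the open set
`f⁻¹' V ∩ ball y₀ (ε / 2)` for some `y₀ ∈ f⁻¹' V`: every point of `V` has two `ε`-apart preimages,
one of which survives, so the remaining closed proper set still maps onto `X`. Hence each `A_ε`
is dense, and Baire's theorem applies to the intersection of the `A_{1/(n+1)}`, which is the set
of points with a unique preimage.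
-/

open Set Topology

def IsIrreducibleMap {X Y : Type*} [TopologicalSpace X] (f : X → Y) : Prop :=
  ∀ A : Set X, IsClosed A → f '' A = univ → A = univ

section Minimal

variable {X : Type*} [TopologicalSpace X] {f : X → X}

theorem surjective_of_dense_orbits [CompactSpace X] [T2Space X] (hf : Continuous f)
    (hmin : ∀ x : X, Dense (range fun n => f^[n] x)) : Function.Surjective f := by
  intro y
  have horbit : (range fun n => f^[n] (f y)) ⊆ range f := by
    rintro _ ⟨n, rfl⟩
    exact ⟨f^[n] y, (Function.iterate_succ_apply' f n y).symm⟩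
  rw [← mem_range, ← (isCompact_range hf).isClosed.closure_eq]
  exact (hmin (f y)).mono horbit y

theorem exists_forall_iterate_mem_of_image_eq_univ [CompactSpace X] [Nonempty X]
    (hf : Continuous f) {A : Set X} (hA : IsClosed A) (hfA : f '' A = univ) :
    ∃ y, ∀ k, f^[k] y ∈ A := by
  let C : ℕ → Set X := fun n => ⋂ k, ⋂ (_ : k < n), f^[k] ⁻¹' A
  have hC_closed n : IsClosed (C n) :=
    isClosed_iInter fun k => isClosed_iInter fun _ => hA.preimage (hf.iterate k)
  -- a preimage in `A` of a point of `C n` lies in `C (n + 1)`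
  have hC_nonempty n : (C n).Nonempty := by
    induction n with
    | zero => exact ⟨Classical.arbitrary X, by simp [C]⟩
    | succ n ih =>
      obtain ⟨y, hy⟩ := ih
      obtain ⟨a, haA, rfl⟩ : y ∈ f '' A := hfA ▸ mem_univ y
      refine ⟨a, mem_iInter₂.mpr fun k hk => ?_⟩
      cases k with
      | zero => exact haA
      | succ k => exact mem_iInter₂.mp hy k (Nat.succ_lt_succ_iff.mp hk)
  obtain ⟨y, hy⟩ := IsCompact.nonempty_iInter_of_sequence_nonempty_isCompact_isClosed C
    (fun n => iInter₂_mono' fun k hk => ⟨k, hk.trans n.lt_succ_self, subset_rfl⟩)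
    hC_nonempty (hC_closed 0).isCompact hC_closed
  simp only [C, mem_iInter, mem_preimage] at hy
  exact ⟨y, fun k => hy (k + 1) k k.lt_succ_self⟩

theorem isIrreducibleMap_of_dense_orbits [CompactSpace X] (hf : Continuous f)
    (hmin : ∀ x : X, Dense (range fun n => f^[n] x)) : IsIrreducibleMap f := by
  intro A hA hfA
  rcases isEmpty_or_nonempty X with hX | hX
  · exact Subsingleton.elim _ _
  obtain ⟨y, hy⟩ := exists_forall_iterate_mem_of_image_eq_univ hf hA hfA
  have horbit := hA.closure_subset_iff.mpr (range_subset_iff.mpr hy)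
  rwa [(hmin y).closure_eq, univ_subset_iff] at horbit

end Minimal

def smallFiberSet {X Y : Type*} [PseudoMetricSpace X] (f : X → Y) (ε : ℝ) : Set Y :=
  {y | ∀ x₁ x₂, f x₁ = y → f x₂ = y → dist x₁ x₂ < ε}

section SmallFibers

variable {X Y : Type*} [PseudoMetricSpace X] [TopologicalSpace Y] {f : X → Y}

theorem isOpen_smallFiberSet [CompactSpace X] [T2Space Y] (hf : Continuous f) (ε : ℝ) :
    IsOpen (smallFiberSet f ε) := by
  have hcompl : (smallFiberSet f ε)ᶜ =
      (fun p : X × X => f p.1) '' {p | f p.1 = f p.2 ∧ ε ≤ dist p.1 p.2} := by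
    ext y
    simp only [smallFiberSet, mem_compl_iff, mem_ofPred_eq, mem_image, Prod.exists, not_forall,
      not_lt]
    constructor
    · rintro ⟨x₁, x₂, rfl, h₂, hε⟩
      exact ⟨x₁, x₂, ⟨h₂.symm, hε⟩, rfl⟩
    · rintro ⟨x₁, x₂, ⟨h, hε⟩, rfl⟩
      exact ⟨x₁, x₂, rfl, h.symm, hε⟩
  have hclosed : IsClosed {p : X × X | f p.1 = f p.2 ∧ ε ≤ dist p.1 p.2} :=
    (isClosed_eq (hf.comp continuous_fst) (hf.comp continuous_snd)).inter
      (isClosed_le continuous_const continuous_dist)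
  rw [← isClosed_compl_iff, hcompl]
  exact (hclosed.isCompact.image (hf.comp continuous_fst)).isClosed

theorem dense_smallFiberSet (hf : Continuous f) (hsurj : Function.Surjective f)
    (hirr : IsIrreducibleMap f) {ε : ℝ} (hε : 0 < ε) : Dense (smallFiberSet f ε) := by
  rw [dense_iff_inter_open]
  rintro V hV ⟨y₀, hy₀⟩
  by_contra hdisj
  obtain ⟨x₀, rfl⟩ := hsurj y₀
  set U := f ⁻¹' V ∩ Metric.ball x₀ (ε / 2)
  -- two preimages at distance `≥ ε` cannot both lie in `U`
  have himage : f '' Uᶜ = univ := by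
    refine eq_univ_of_forall fun y => ?_
    by_cases hyV : y ∈ V
    · obtain ⟨x₁, x₂, h₁, h₂, hε'⟩ : ∃ x₁ x₂, f x₁ = y ∧ f x₂ = y ∧ ε ≤ dist x₁ x₂ := by
        by_contra! hsmall
        exact hdisj ⟨y, hyV, hsmall⟩
      by_cases hx₁ : x₁ ∈ Metric.ball x₀ (ε / 2)
      · refine ⟨x₂, fun hx₂ => hε'.not_gt ?_, h₂⟩
        calc dist x₁ x₂ ≤ dist x₁ x₀ + dist x₂ x₀ := dist_triangle_right _ _ _
          _ < ε / 2 + ε / 2 := add_lt_add hx₁ hx₂.2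
          _ = ε := add_halves ε
      · exact ⟨x₁, fun hx₁' => hx₁ hx₁'.2, h₁⟩
    · obtain ⟨x, rfl⟩ := hsurj y
      exact ⟨x, fun hx => hyV hx.1, rfl⟩
  have hU : Uᶜ = univ := hirr _ ((hV.preimage hf).inter Metric.isOpen_ball).isClosed_compl himage
  exact (hU ▸ mem_univ x₀ : x₀ ∈ Uᶜ) ⟨hy₀, Metric.mem_ball_self (half_pos hε)⟩

end SmallFibers

theorem setOf_existsUnique_eq_iInter_smallFiberSet {X Y : Type*} [MetricSpace X] {f : X → Y}
    (hsurj : Function.Surjective f) :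
    {y | ∃! x, f x = y} = ⋂ n : ℕ, smallFiberSet f (1 / (n + 1)) := by
  ext y
  simp only [smallFiberSet, mem_ofPred_eq, mem_iInter]
  constructor
  · rintro ⟨x, -, hx⟩ n x₁ x₂ h₁ h₂
    rw [hx x₁ h₁, hx x₂ h₂, dist_self]
    exact Nat.one_div_pos_of_nat
  · intro hsmall
    obtain ⟨x, rfl⟩ := hsurj y
    refine ⟨x, rfl, fun x' hx' => dist_le_zero.mp (le_of_forall_gt fun ε hε => ?_)⟩
    obtain ⟨n, hn⟩ := exists_nat_one_div_lt hε
    exact (hsmall n x' x hx' rfl).trans hn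

/-- A continuous minimal map of a compact metric space is almost one-to-one:
the set of points with exactly one preimage is a dense Gδ set. -/
theorem minimal_map_almost_one_to_one
    {X : Type*} [MetricSpace X] [CompactSpace X]
    (f : X → X) (hf : Continuous f)
    (hmin : ∀ x : X, Dense (Set.range fun n => f^[n] x)) :
    Dense {x : X | ∃! y : X, f y = x} ∧ IsGδ {x : X | ∃! y : X, f y = x} := by
  have hsurj := surjective_of_dense_orbits hf hmin
  have hirr := isIrreducibleMap_of_dense_orbits hf hmin
  have hopen n := isOpen_smallFiberSet hf (1 / ((n : ℕ) + 1 : ℝ))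
  rw [setOf_existsUnique_eq_iInter_smallFiberSet hsurj]
  exact ⟨dense_iInter_of_isOpen hopen fun _ => dense_smallFiberSet hf hsurj hirr
      Nat.one_div_pos_of_nat, .iInter fun n => (hopen n).isGδ⟩
end
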